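/- arXiv:2409.16173 — 6 statements merged into one kernel-verified Lean document; each statement's English description precedes it below -/
import Mathlib

section
/- Let I be a roommates instance with ties and numbers 0<γ_e^v<δ_e^v. For every γ-stable fractional-matching M of I there exists a γ-stable half-matching M̂ of I with Σ_{e∈E} M̂(e) ≥ Σ_{e∈E} M(e). -/
open Finset

namespace SR

variable {V E : Type*} [Fintype V] [Fintype E] [DecidableEq V] [DecidableEq E]

/-- The set of edges incident to a vertex `v`.  A multigraph is given by a finite
edge type `E`, a finite vertex type `V` and two endpoint maps `es et : E → V`
(each edge is the unordered pair of its two distinct endpoints; the orientation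
merely records a fixed ordering of the vertices). -/
def incident (es et : E → V) (v : V) : Finset E :=
  univ.filter fun e => es e = v ∨ et e = v

/-- `Σ_{e ∈ E(v)} M(e)`. -/
noncomputable def degSum (es et : E → V) (M : E → ℝ) (v : V) : ℝ :=
  ∑ e ∈ incident es et v, M e

/-- A fractional-matching. -/
def IsFrac (es et : E → V) (M : E → ℝ) : Prop :=
  (∀ e, 0 ≤ M e) ∧ ∀ v, degSum es et M v ≤ 1

/-- A half-matching. -/
def IsHalf (es et : E → V) (M : E → ℝ) : Prop :=
  IsFrac es et M ∧ ∀ e, M e = 0 ∨ M e = 1 / 2 ∨ M e = 1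

/-- An integral matching (as a fractional-matching). -/
def IsIntegral (M : E → ℝ) : Prop := ∀ e, M e = 0 ∨ M e = 1

/-- The size `Σ_{e ∈ E} M(e)` of a fractional-matching. -/
noncomputable def size (M : E → ℝ) : ℝ := ∑ e, M e

/-- `v` is saturated by `M`. -/
def Saturated (es et : E → V) (M : E → ℝ) (v : V) : Prop :=
  degSum es et M v = 1

/-- `p_v(M)`: the minimum of `p_v(e)` over incident edges with `M(e) > 0` if `v`
is saturated, and `p_v(∅)` otherwise. -/
noncomputable def pval (es et : E → V) (p : V → E → ℝ) (pE : V → ℝ)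
    (M : E → ℝ) (v : V) : ℝ :=
  if h : degSum es et M v = 1 ∧ ((incident es et v).filter fun e => 0 < M e).Nonempty
  then ((incident es et v).filter fun e => 0 < M e).inf' h.2 (p v)
  else pE v

/-- An edge blocks `M` (weak stability, preferences with ties). -/
def WeakBlocks (es et : E → V) (p : V → E → ℝ) (pE : V → ℝ)
    (M : E → ℝ) (e : E) : Prop :=
  M e < 1 ∧ pval es et p pE M (es e) < p (es e) e ∧
    pval es et p pE M (et e) < p (et e) e

/-- Weak stability. -/
def WeaklyStable (es et : E → V) (p : V → E → ℝ) (pE : V → ℝ)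
    (M : E → ℝ) : Prop :=
  ∀ e, ¬ WeakBlocks es et p pE M e

/-- An edge `γ`-blocks `M`. -/
def GammaBlocks (es et : E → V) (p : V → E → ℝ) (pE : V → ℝ)
    (γ δ : V → E → ℝ) (M : E → ℝ) (e : E) : Prop :=
  0 ≤ min (p (es e) e - pval es et p pE M (es e) - γ (es e) e)
        (p (et e) e - pval es et p pE M (et e) - δ (et e) e) ∨
  0 ≤ min (p (es e) e - pval es et p pE M (es e) - δ (es e) e)
        (p (et e) e - pval es et p pE M (et e) - γ (et e) e)

/-- `γ`-stability. -/
def GammaStable (es et : E → V) (p : V → E → ℝ) (pE : V → ℝ)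
    (γ δ : V → E → ℝ) (M : E → ℝ) : Prop :=
  ∀ e, ¬ GammaBlocks es et p pE γ δ M e

/-- `pref v` is a strict linear order on the edges incident to `v`, for each `v`. -/
def IsStrictPref (es et : E → V) (pref : V → E → E → Prop) : Prop :=
  ∀ v, (∀ e ∈ incident es et v, ¬ pref v e e) ∧
    (∀ e ∈ incident es et v, ∀ f ∈ incident es et v, ∀ g ∈ incident es et v,
      pref v e f → pref v f g → pref v e g) ∧
    (∀ e ∈ incident es et v, ∀ f ∈ incident es et v, e ≠ f → pref v e f ∨ pref v f e)

/-- An edge blocks `M` (strict preferences). -/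
def StrictBlocks (es et : E → V) (pref : V → E → E → Prop)
    (M : E → ℝ) (e : E) : Prop :=
  M e < 1 ∧ ∀ w, (es e = w ∨ et e = w) →
    (¬ Saturated es et M w ∨ ∃ f ∈ incident es et w, 0 < M f ∧ pref w e f)

/-- Stability for strict preferences. -/
def StableStrict (es et : E → V) (pref : V → E → E → Prop) (M : E → ℝ) : Prop :=
  ∀ e, ¬ StrictBlocks es et pref M e

/-- The extension of the strict preferences of `v` to `E(v) ∪ {∅}`, where `∅ = none`. -/
def prefExt (pref : V → E → E → Prop) (v : V) : Option E → Option E → Prop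
  | some e, some f => pref v e f
  | some _, none => True
  | none, _ => False

/-- `vote_v(a,b) ∈ {+1, 0, -1}`. -/
noncomputable def vote (pref : V → E → E → Prop) (v : V) (a b : Option E) : ℝ :=
  haveI : Decidable (prefExt pref v a b) := Classical.propDecidable _
  if a = b then 0 else if prefExt pref v a b then 1 else -1

/-- `E(v) ∪ {∅}` as a finset of `Option E`. -/
def optIncident (es et : E → V) (v : V) : Finset (Option E) :=
  insert none ((incident es et v).map Function.Embedding.some)

/-- A feasible pairing between the fractional-matchings `M` and `N`. -/
def FeasiblePairing (es et : E → V) (M N : E → ℝ)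
    (φ : V → Option E → Option E → ℝ) : Prop :=
  (∀ v a b, 0 ≤ φ v a b) ∧
  (∀ v, ∀ e ∈ incident es et v,
      ∑ f ∈ optIncident es et v, φ v (some e) f = max (M e - N e) 0) ∧
  (∀ v, ∀ e ∈ incident es et v,
      ∑ f ∈ optIncident es et v, φ v f (some e) = max (N e - M e) 0) ∧
  (∀ v, ∑ f ∈ optIncident es et v, φ v f none
      = max (degSum es et M v - degSum es et N v) 0) ∧
  (∀ v, ∑ f ∈ optIncident es et v, φ v none f
      = max (degSum es et N v - degSum es et M v) 0)

/-- A sensible pairing between the fractional-matchings `M` and `N`. -/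
def SensiblePairing (es et : E → V) (M N : E → ℝ)
    (φ : V → Option E → Option E → ℝ) : Prop :=
  (∀ v a b, 0 ≤ φ v a b) ∧
  (∀ v, ∀ e ∈ incident es et v,
      ∑ f ∈ optIncident es et v, φ v (some e) f = M e) ∧
  (∀ v, ∀ e ∈ incident es et v,
      ∑ f ∈ optIncident es et v, φ v f (some e) = N e) ∧
  (∀ v, 0 < ∑ f ∈ optIncident es et v, φ v none f → degSum es et M v < 1) ∧
  (∀ v, 0 < ∑ f ∈ optIncident es et v, φ v f none → degSum es et N v < 1) ∧
  (∀ e, φ (es e) (some e) (some e) = φ (et e) (some e) (some e))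

/-- `Δ(M,N,φ)`. -/
noncomputable def Delta (es et : E → V) (pref : V → E → E → Prop)
    (φ : V → Option E → Option E → ℝ) : ℝ :=
  ∑ v, ∑ a ∈ optIncident es et v, ∑ b ∈ optIncident es et v,
    φ v a b * vote pref v a b

/-- A popular fractional-matching. -/
def PopularFrac (es et : E → V) (pref : V → E → E → Prop) (M : E → ℝ) : Prop :=
  ∀ N, IsFrac es et N → ∀ φ, FeasiblePairing es et M N φ → 0 ≤ Delta es et pref φ

/-- An extra-popular fractional-matching. -/
def ExtraPopular (es et : E → V) (pref : V → E → E → Prop) (M : E → ℝ) : Prop :=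
  ∀ N, IsFrac es et N → ∀ φ, SensiblePairing es et M N φ → 0 ≤ Delta es et pref φ

/-- A barely-defendable fractional-matching. -/
def BarelyDefendable (es et : E → V) (pref : V → E → E → Prop) (M : E → ℝ) : Prop :=
  ∀ N, IsFrac es et N → ∃ φ, SensiblePairing es et M N φ ∧ 0 ≤ Delta es et pref φ

/-- The mixed comparison score of `M` versus `N`. -/
noncomputable def mixedScore (es et : E → V) (pref : V → E → E → Prop)
    (M N : E → ℝ) : ℝ :=
  ∑ v, ((∑ e ∈ incident es et v, ∑ f ∈ incident es et v,
        M e * N f * vote pref v (some e) (some f))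
    + (∑ e ∈ incident es et v,
        M e * (1 - degSum es et N v) * vote pref v (some e) none)
    + (∑ f ∈ incident es et v,
        N f * (1 - degSum es et M v) * vote pref v none (some f)))

/-- A popular mixed-matching. -/
def PopularMixed (es et : E → V) (pref : V → E → E → Prop) (M : E → ℝ) : Prop :=
  ∀ N, IsFrac es et N → 0 ≤ mixedScore es et pref M N

/-- The weight `Σ_e ω(e)·M(e)` of a fractional-matching. -/
noncomputable def wsize (ω M : E → ℝ) : ℝ := ∑ e, ω e * M e


section Rounding
set_option linter.unusedSectionVars false
set_option maxHeartbeats 1000000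
attribute [local instance] Classical.propDecidable
variable (es et : E → V)

lemma mem_incident_iff {v : V} {e : E} : e ∈ incident es et v ↔ es e = v ∨ et e = v := by
  simp [incident]
lemma mem_incident_s (e : E) : e ∈ incident es et (es e) := by simp [incident]
lemma edge_le_degSum {x : E → ℝ} (hx : ∀ e, 0 ≤ x e) (e : E) :
    x e ≤ degSum es et x (es e) :=
  Finset.single_le_sum (fun f _ => hx f) (mem_incident_s es et e)
lemma edge_le_one {x : E → ℝ} (hx : IsFrac es et x) (e : E) : x e ≤ 1 :=
  (edge_le_degSum es et hx.1 e).trans (hx.2 (es e))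
lemma degSum_add_mul (x y : E → ℝ) (t : ℝ) (v : V) :
    degSum es et (fun e => x e + t * y e) v = degSum es et x v + t * degSum es et y v := by
  simp [degSum, Finset.sum_add_distrib, Finset.mul_sum]
lemma sum_zero_one {s : Finset E} {g : E → ℝ} (h : ∀ e ∈ s, g e = 0 ∨ g e = 1) :
    (∑ e ∈ s, g e = 0) ∨ 1 ≤ ∑ e ∈ s, g e := by
  by_cases h0 : ∀ e ∈ s, g e = 0
  · exact Or.inl (Finset.sum_eq_zero h0)
  · push_neg at h0
    obtain ⟨e0, he0, hne0⟩ := h0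
    exact Or.inr (((h e0 he0).resolve_left hne0).symm.le.trans
      (Finset.single_le_sum (fun f hf => by rcases h f hf with h' | h' <;> simp [h']) he0))
lemma handshake (hne : ∀ e, es e ≠ et e) (B : Finset E) :
    ∑ v : V, (B.filter fun e => es e = v ∨ et e = v).card = 2 * B.card := by
  have h2 : ∀ v : V, (B.filter fun e => es e = v ∨ et e = v).card
      = ∑ e ∈ B, if es e = v ∨ et e = v then 1 else 0 := fun v => by rw [Finset.card_filter]
  simp_rw [h2]
  rw [Finset.sum_comm]
  have h3 : ∀ e ∈ B, (∑ v : V, if es e = v ∨ et e = v then 1 else 0) = 2 := by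
    intro e _
    have h1 : (Finset.univ.filter fun v => es e = v ∨ et e = v) = {es e, et e} := by
      ext v; simp [eq_comm]
    rw [← Finset.card_filter, h1, Finset.card_pair (hne e)]
  rw [Finset.sum_congr rfl h3, Finset.sum_const, smul_eq_mul, mul_comm]

/-- key structural lemma: if no nonzero feasible direction exists, all fractional
edges have value 1/2. -/
lemma stuck_all_half (hne : ∀ e, es e ≠ et e) (x : E → ℝ) (hx : IsFrac es et x)
    (hstuck : ∀ y : E → ℝ, (∀ e, x e = 0 ∨ x e = 1 → y e = 0) →
      (∀ v, degSum es et x v = 1 → degSum es et y v = 0) → y = 0) :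
    ∀ e, x e = 0 ∨ x e = 1/2 ∨ x e = 1 := by
  set B : Finset E := univ.filter (fun e => ¬(x e = 0 ∨ x e = 1)) with hBdef
  have memB : ∀ {e : E}, e ∈ B ↔ ¬(x e = 0 ∨ x e = 1) := by
    intro e; simp [hBdef]
  have hBpos : ∀ e ∈ B, 0 < x e := by
    intro e he
    rcases (hx.1 e).lt_or_eq with h | h
    · exact h
    · exact absurd (Or.inl h.symm) (memB.mp he)
  have hBlt : ∀ e ∈ B, x e < 1 := by
    intro e he
    rcases (edge_le_one es et hx e).lt_or_eq with h | h
    · exact h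
    · exact absurd (Or.inr h) (memB.mp he)
  set T : Finset V := univ.filter
    (fun v => degSum es et x v = 1 ∧ (B.filter fun e => es e = v ∨ et e = v).Nonempty) with hTdef
  have memT : ∀ {v : V}, v ∈ T ↔ degSum es et x v = 1 ∧
      (B.filter fun e => es e = v ∨ et e = v).Nonempty := by
    intro v; simp [hTdef]
  set f : V → ℕ := fun v => (B.filter fun e => es e = v ∨ et e = v).card with hfdef
  -- every vertex of T has at least two incident fractional edges
  have hf2 : ∀ v ∈ T, 2 ≤ f v := by
    intro v hv
    obtain ⟨hdeg, e0, he0⟩ := memT.mp hv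
    rw [Finset.mem_filter] at he0
    by_contra hlt
    push_neg at hlt
    interval_cases h : f v
    · exact absurd (Finset.card_eq_zero.mp h ▸ Finset.mem_filter.mpr he0) (Finset.notMem_empty e0)
    · -- exactly one fractional edge at v : its value would be integral
      obtain ⟨e1, he1⟩ := Finset.card_eq_one.mp h
      have he0e1 : e0 = e1 := by
        have := he1 ▸ Finset.mem_filter.mpr he0; simpa using this
      subst he0e1
      have hinc : e0 ∈ incident es et v := mem_incident_iff es et |>.mpr he0.2
      have hsplit : ∑ e ∈ (incident es et v).erase e0, x e + x e0 = degSum es et x v :=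
        Finset.sum_erase_add _ _ hinc
      have hrest : ∀ e ∈ (incident es et v).erase e0, x e = 0 ∨ x e = 1 := by
        intro e he
        rw [Finset.mem_erase] at he
        by_contra hc
        have heB : e ∈ B.filter fun e => es e = v ∨ et e = v :=
          Finset.mem_filter.mpr ⟨memB.mpr hc, (mem_incident_iff es et).mp he.2⟩
        rw [he1] at heB
        exact he.1 (by simpa using heB)
      rcases sum_zero_one hrest with h' | h'
      · have : x e0 = 1 := by rw [← hdeg, ← hsplit, h', zero_add]
        exact (memB.mp he0.1) (Or.inr this)
      · have : x e0 ≤ 0 := by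
          have := hsplit; rw [hdeg] at this; linarith
        exact absurd (hBpos e0 he0.1) (not_lt.mpr this)
  -- counting: B.card ≤ T.card via injectivity of the incidence map
  have hcard : B.card ≤ T.card := by
    classical
    set L : ((↑B : Type _) → ℝ) →ₗ[ℝ] ((↑T : Type _) → ℝ) :=
      { toFun := fun z v => ∑ e ∈ incident es et v.1,
          (if h : e ∈ B then z ⟨e, h⟩ else 0)
        map_add' := by
          intro a b; funext v
          have h5 : ∀ e ∈ incident es et v.1,
              (if h : e ∈ B then a ⟨e, h⟩ + b ⟨e, h⟩ else 0)
              = (if h : e ∈ B then a ⟨e, h⟩ else 0) + (if h : e ∈ B then b ⟨e, h⟩ else 0) := by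
            intro e _; split <;> simp
          simp only [Pi.add_apply]
          rw [Finset.sum_congr rfl h5, Finset.sum_add_distrib]
        map_smul' := by
          intro c a; funext v
          have h5 : ∀ e ∈ incident es et v.1,
              (if h : e ∈ B then c * a ⟨e, h⟩ else 0)
              = c * (if h : e ∈ B then a ⟨e, h⟩ else 0) := by
            intro e _; split <;> simp
          simp only [RingHom.id_apply, Pi.smul_apply, smul_eq_mul]
          rw [Finset.sum_congr rfl h5, ← Finset.mul_sum] } with hLdef
    have hker : ∀ z, L z = 0 → z = 0 := by
      intro z hz
      set y : E → ℝ := fun e => if h : e ∈ B then z ⟨e, h⟩ else 0 with hydef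
      have hy : y = 0 := by
        apply hstuck
        · intro e he
          have : e ∉ B := fun hc => (memB.mp hc) he
          simp [hydef, this]
        · intro v hv
          by_cases hT : v ∈ T
          · have := congrFun hz ⟨v, hT⟩
            simpa [hLdef, degSum, hydef] using this
          · -- no fractional edge at v
            apply Finset.sum_eq_zero
            intro e he
            have : e ∉ B := by
              intro heB
              exact hT (memT.mpr ⟨hv, ⟨e, Finset.mem_filter.mpr
                ⟨heB, (mem_incident_iff es et).mp he⟩⟩⟩)
            simp [hydef, this]
      funext e
      have := congrFun hy e.1
      simpa [hydef, e.2] using this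
    have hinj : Function.Injective L := by
      intro a b hab
      have : L (a - b) = 0 := by rw [map_sub, hab, sub_self]
      have := hker _ this
      exact sub_eq_zero.mp this
    have := LinearMap.finrank_le_finrank_of_injective hinj
    rwa [Module.finrank_fintype_fun_eq_card, Module.finrank_fintype_fun_eq_card,
      Fintype.card_coe, Fintype.card_coe] at this
  -- force equalities
  have hsumT : ∑ v ∈ T, f v ≤ 2 * B.card := by
    rw [← handshake es et hne B]
    exact Finset.sum_le_sum_of_subset (Finset.subset_univ T)
  have h2T : 2 * T.card ≤ ∑ v ∈ T, f v := by
    calc 2 * T.card = ∑ _v ∈ T, 2 := by rw [Finset.sum_const, smul_eq_mul, mul_comm]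
      _ ≤ ∑ v ∈ T, f v := Finset.sum_le_sum hf2
  have heq1 : ∑ v ∈ T, f v = 2 * T.card := by omega
  have hhs : ∑ v : V, f v = 2 * B.card := handshake es et hne B
  have heq2 : ∑ v ∈ T, f v = ∑ v : V, f v := by omega
  -- f v = 2 on T
  have hfT : ∀ v ∈ T, f v = 2 := by
    by_contra hc
    push_neg at hc
    obtain ⟨v0, hv0, hv0ne⟩ := hc
    have : 2 * T.card < ∑ v ∈ T, f v := by
      have hstrict : ∀ v ∈ T, 2 ≤ f v := hf2
      calc 2 * T.card = ∑ _v ∈ T, 2 := by rw [Finset.sum_const, smul_eq_mul, mul_comm]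
        _ < ∑ v ∈ T, f v := Finset.sum_lt_sum hstrict ⟨v0, hv0, lt_of_le_of_ne (hf2 v0 hv0) (Ne.symm hv0ne)⟩
    omega
  -- f v = 0 off T
  have hfT0 : ∀ v ∉ T, f v = 0 := by
    have hsplit : ∑ v ∈ T, f v + ∑ v ∈ Tᶜ, f v = ∑ v : V, f v := Finset.sum_add_sum_compl T f
    have : ∑ v ∈ Tᶜ, f v = 0 := by omega
    intro v hv
    exact (Finset.sum_eq_zero_iff.mp this) v (Finset.mem_compl.mpr hv)
  -- build the canonical direction
  set y : E → ℝ := fun e => if e ∈ B then x e - 1/2 else 0 with hydef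
  have hy : y = 0 := by
    apply hstuck
    · intro e he
      have : e ∉ B := fun hc => (memB.mp hc) he
      simp [hydef, this]
    · intro v hv
      by_cases hT : v ∈ T
      · -- exactly two fractional edges e1 e2 with x e1 + x e2 = 1
        obtain ⟨e1, e2, h12, hpair⟩ := Finset.card_eq_two.mp (hfT v hT)
        have he1 : e1 ∈ B.filter fun e => es e = v ∨ et e = v := by rw [hpair]; simp
        have he2 : e2 ∈ B.filter fun e => es e = v ∨ et e = v := by rw [hpair]; simp
        rw [Finset.mem_filter] at he1 he2
        have hinc1 : e1 ∈ incident es et v := (mem_incident_iff es et).mpr he1.2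
        have hinc2 : e2 ∈ incident es et v := (mem_incident_iff es et).mpr he2.2
        have hsub : ({e1, e2} : Finset E) ⊆ incident es et v := by
          intro e he; rcases Finset.mem_insert.mp he with h | h
          · exact h ▸ hinc1
          · exact (Finset.mem_singleton.mp h) ▸ hinc2
        have hrest0 : ∀ e ∈ incident es et v \ {e1, e2}, x e = 0 ∨ x e = 1 := by
          intro e he
          rw [Finset.mem_sdiff] at he
          by_contra hc
          have : e ∈ B.filter fun e => es e = v ∨ et e = v :=
            Finset.mem_filter.mpr ⟨memB.mpr hc, (mem_incident_iff es et).mp he.1⟩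
          rw [hpair] at this
          exact he.2 this
        have hsum12 : x e1 + x e2 = 1 := by
          have hsplit : ∑ e ∈ incident es et v \ {e1, e2}, x e + ∑ e ∈ {e1, e2}, x e
              = degSum es et x v := Finset.sum_sdiff hsub
          rw [Finset.sum_pair h12] at hsplit
          rcases sum_zero_one hrest0 with h' | h'
          · rw [h', zero_add] at hsplit; rw [hsplit]; exact (memT.mp hT).1
          · exfalso
            have hd := (memT.mp hT).1
            have := hBpos e1 he1.1
            have := hBpos e2 he2.1
            rw [hd] at hsplit
            linarith
        -- degSum y v = (x e1 - 1/2) + (x e2 - 1/2) = 0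
        have hyrest : ∀ e ∈ incident es et v \ {e1, e2}, y e = 0 := by
          intro e he
          have : e ∉ B := by
            intro heB
            have : e ∈ B.filter fun e => es e = v ∨ et e = v :=
              Finset.mem_filter.mpr ⟨heB, (mem_incident_iff es et).mp (Finset.mem_sdiff.mp he).1⟩
            rw [hpair] at this
            exact (Finset.mem_sdiff.mp he).2 this
          simp [hydef, this]
        have hsplit : ∑ e ∈ incident es et v \ {e1, e2}, y e + ∑ e ∈ {e1, e2}, y e
            = degSum es et y v := Finset.sum_sdiff hsub
        rw [Finset.sum_eq_zero hyrest, Finset.sum_pair h12, zero_add] at hsplit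
        rw [← hsplit]
        simp only [hydef, if_pos he1.1, if_pos he2.1]
        linarith
      · apply Finset.sum_eq_zero
        intro e he
        have : e ∉ B := by
          intro heB
          exact hT (memT.mpr ⟨hv, ⟨e, Finset.mem_filter.mpr
            ⟨heB, (mem_incident_iff es et).mp he⟩⟩⟩)
        simp [hydef, this]
  intro e
  by_cases heB : e ∈ B
  · right; left
    have h6 := congrFun hy e
    simp only [hydef, if_pos heB, Pi.zero_apply] at h6
    linarith
  · rcases not_not.mp (fun hc => heB (memB.mpr hc)) with h | h
    · exact Or.inl h
    · exact Or.inr (Or.inr h)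
/-- the measure for the rounding induction -/
noncomputable def mu (x : E → ℝ) : ℕ :=
  (univ.filter fun e => ¬(x e = 0 ∨ x e = 1)).card * (Fintype.card V + 1)
    + (univ.filter fun v => degSum es et x v ≠ 1).card

lemma step (x : E → ℝ) (hx : IsFrac es et x) (y : E → ℝ) (hy0 : y ≠ 0)
    (hsupp : ∀ e, x e = 0 ∨ x e = 1 → y e = 0)
    (htight : ∀ v, degSum es et x v = 1 → degSum es et y v = 0)
    (hsum : 0 ≤ ∑ e, y e) :
    ∃ x' : E → ℝ, IsFrac es et x' ∧ (∀ e, 0 < x' e → 0 < x e) ∧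
      (∀ v, degSum es et x v = 1 → degSum es et x' v = 1) ∧
      size x ≤ size x' ∧ mu es et x' < mu es et x := by
  classical
  -- the bound set
  set S : Finset ℝ :=
    ((univ.filter fun e => y e ≠ 0).image
        fun e => if 0 < y e then (1 - x e) / y e else x e / (-y e))
    ∪ ((univ.filter fun v => degSum es et x v ≠ 1 ∧ 0 < degSum es et y v).image
        fun v => (1 - degSum es et x v) / degSum es et y v) with hSdef
  have hfrac : ∀ e, y e ≠ 0 → 0 < x e ∧ x e < 1 := by
    intro e hye
    have h1 : ¬(x e = 0 ∨ x e = 1) := fun h => hye (hsupp e h)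
    push_neg at h1
    constructor
    · exact lt_of_le_of_ne (hx.1 e) (Ne.symm h1.1)
    · exact lt_of_le_of_ne (edge_le_one es et hx e) h1.2
  have hSpos : ∀ s ∈ S, 0 < s := by
    intro s hs
    rcases Finset.mem_union.mp hs with h | h
    · obtain ⟨e, he, rfl⟩ := Finset.mem_image.mp h
      rw [Finset.mem_filter] at he
      obtain ⟨hxe0, hxe1⟩ := hfrac e he.2
      by_cases hy : 0 < y e
      · rw [if_pos hy]; exact div_pos (by linarith) hy
      · rw [if_neg hy]
        have : y e < 0 := lt_of_le_of_ne (not_lt.mp hy) he.2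
        exact div_pos hxe0 (by linarith)
    · obtain ⟨v, hv, rfl⟩ := Finset.mem_image.mp h
      rw [Finset.mem_filter] at hv
      have : degSum es et x v < 1 := lt_of_le_of_ne (hx.2 v) hv.2.1
      exact div_pos (by linarith) hv.2.2
  have hSne : S.Nonempty := by
    obtain ⟨e0, he0⟩ : ∃ e, y e ≠ 0 := by
      by_contra hc; push_neg at hc; exact hy0 (funext hc)
    exact ⟨_, Finset.mem_union_left _ (Finset.mem_image.mpr
      ⟨e0, Finset.mem_filter.mpr ⟨Finset.mem_univ e0, he0⟩, rfl⟩)⟩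
  set t : ℝ := S.min' hSne with htdef
  have ht_pos : 0 < t := hSpos _ (S.min'_mem hSne)
  have ht_le : ∀ s ∈ S, t ≤ s := fun s hs => S.min'_le s hs
  -- bounds on t
  have ht_edge_pos : ∀ e, 0 < y e → t ≤ (1 - x e) / y e := by
    intro e hy
    have := ht_le _ (Finset.mem_union_left _ (Finset.mem_image.mpr
      ⟨e, Finset.mem_filter.mpr ⟨Finset.mem_univ e, ne_of_gt hy⟩, rfl⟩))
    rwa [if_pos hy] at this
  have ht_edge_neg : ∀ e, y e < 0 → t ≤ x e / (-y e) := by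
    intro e hy
    have := ht_le _ (Finset.mem_union_left _ (Finset.mem_image.mpr
      ⟨e, Finset.mem_filter.mpr ⟨Finset.mem_univ e, ne_of_lt hy⟩, rfl⟩))
    rwa [if_neg (not_lt.mpr hy.le)] at this
  have ht_vert : ∀ v, degSum es et x v ≠ 1 → 0 < degSum es et y v →
      t ≤ (1 - degSum es et x v) / degSum es et y v := by
    intro v h1 h2
    exact ht_le _ (Finset.mem_union_right _ (Finset.mem_image.mpr
      ⟨v, Finset.mem_filter.mpr ⟨Finset.mem_univ v, h1, h2⟩, rfl⟩))
  set x' : E → ℝ := fun e => x e + t * y e with hx'def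
  have hx'nonneg : ∀ e, 0 ≤ x' e := by
    intro e
    rcases lt_trichotomy (y e) 0 with h | h | h
    · have h1 := ht_edge_neg e h
      rw [le_div_iff₀ (by linarith)] at h1
      simp only [hx'def]; nlinarith
    · simp [hx'def, h, hx.1 e]
    · simp only [hx'def]; nlinarith [hx.1 e, ht_pos]
  have hx'le1 : ∀ e, x' e ≤ 1 := by
    intro e
    rcases lt_trichotomy (y e) 0 with h | h | h
    · simp only [hx'def]; nlinarith [edge_le_one es et hx e]
    · simp [hx'def, h, edge_le_one es et hx e]
    · have h1 := ht_edge_pos e h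
      rw [le_div_iff₀ h] at h1
      simp only [hx'def]; nlinarith
  have hdeg' : ∀ v, degSum es et x' v = degSum es et x v + t * degSum es et y v :=
    fun v => degSum_add_mul es et x y t v
  have hx'deg : ∀ v, degSum es et x' v ≤ 1 := by
    intro v
    rw [hdeg' v]
    by_cases h1 : degSum es et x v = 1
    · rw [htight v h1, h1]; ring_nf; norm_num
    · rcases le_or_gt (degSum es et y v) 0 with h2 | h2
      · nlinarith [hx.2 v, ht_pos]
      · have h3 := ht_vert v h1 h2
        rw [le_div_iff₀ h2] at h3
        linarith
  have hx'frac : IsFrac es et x' := ⟨hx'nonneg, hx'deg⟩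
  have hx'supp : ∀ e, 0 < x' e → 0 < x e := by
    intro e he
    rcases (hx.1 e).lt_or_eq with h | h
    · exact h
    · exfalso
      have : y e = 0 := hsupp e (Or.inl h.symm)
      simp only [hx'def, ← h, this] at he
      simp at he
  have hx'tight : ∀ v, degSum es et x v = 1 → degSum es et x' v = 1 := by
    intro v hv; rw [hdeg' v, htight v hv, hv]; ring
  have hx'size : size x ≤ size x' := by
    have : size x' = size x + t * ∑ e, y e := by
      simp [size, hx'def, Finset.sum_add_distrib, Finset.mul_sum]
    rw [this]
    nlinarith
  -- unchanged edges
  have hunch : ∀ e, ¬(x e = 0 ∨ x e = 1) → x' e = 0 ∨ x' e = 1 → False → True := fun _ _ _ _ => trivial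
  have hfracsub : (univ.filter fun e => ¬(x' e = 0 ∨ x' e = 1))
      ⊆ (univ.filter fun e => ¬(x e = 0 ∨ x e = 1)) := by
    intro e he
    rw [Finset.mem_filter] at he ⊢
    refine ⟨Finset.mem_univ e, fun hc => he.2 ?_⟩
    have : y e = 0 := hsupp e hc
    simp only [hx'def, this, mul_zero, add_zero]
    exact hc
  have huntightsub : (univ.filter fun v => degSum es et x' v ≠ 1)
      ⊆ (univ.filter fun v => degSum es et x v ≠ 1) := by
    intro v hv
    rw [Finset.mem_filter] at hv ⊢
    exact ⟨Finset.mem_univ v, fun hc => hv.2 (hx'tight v hc)⟩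
  have huntight_le : (univ.filter fun v => degSum es et x' v ≠ 1).card ≤ Fintype.card V :=
    (Finset.card_filter_le _ _).trans (by rw [Finset.card_univ])
  -- the minimum is attained
  have hmem := S.min'_mem hSne
  rw [← htdef] at hmem
  have hmu : mu es et x' < mu es et x := by
    rcases Finset.mem_union.mp hmem with h | h
    · -- an edge becomes integral
      obtain ⟨e1, he1, heq⟩ := Finset.mem_image.mp h
      rw [Finset.mem_filter] at he1
      have he1B : ¬(x e1 = 0 ∨ x e1 = 1) := by
        obtain ⟨h1, h2⟩ := hfrac e1 he1.2
        push_neg; exact ⟨ne_of_gt h1, ne_of_lt h2⟩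
      have he1' : x' e1 = 0 ∨ x' e1 = 1 := by
        by_cases hy : 0 < y e1
        · right
          rw [if_pos hy] at heq
          simp only [hx'def, ← heq]
          field_simp
          ring
        · left
          have hyneg : y e1 < 0 := lt_of_le_of_ne (not_lt.mp hy) he1.2
          rw [if_neg hy] at heq
          simp only [hx'def, ← heq]
          field_simp [he1.2]
          ring
      have hssub : (univ.filter fun e => ¬(x' e = 0 ∨ x' e = 1))
          ⊂ (univ.filter fun e => ¬(x e = 0 ∨ x e = 1)) := by
        refine Finset.ssubset_iff_of_subset hfracsub |>.mpr ?_
        exact ⟨e1, Finset.mem_filter.mpr ⟨Finset.mem_univ e1, he1B⟩,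
          fun hc => (Finset.mem_filter.mp hc).2 he1'⟩
      have h1 : (univ.filter fun e => ¬(x' e = 0 ∨ x' e = 1)).card + 1
          ≤ (univ.filter fun e => ¬(x e = 0 ∨ x e = 1)).card := Finset.card_lt_card hssub
      unfold mu
      have h2 := huntight_le
      nlinarith [Finset.card_le_card huntightsub]
    · -- a vertex becomes tight
      obtain ⟨v1, hv1, heq⟩ := Finset.mem_image.mp h
      rw [Finset.mem_filter] at hv1
      have hv1' : degSum es et x' v1 = 1 := by
        rw [hdeg' v1, ← heq]
        field_simp [ne_of_gt hv1.2.2]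
        ring
      have hssub : (univ.filter fun v => degSum es et x' v ≠ 1)
          ⊂ (univ.filter fun v => degSum es et x v ≠ 1) := by
        refine Finset.ssubset_iff_of_subset huntightsub |>.mpr ?_
        exact ⟨v1, Finset.mem_filter.mpr ⟨Finset.mem_univ v1, hv1.2.1⟩,
          fun hc => (Finset.mem_filter.mp hc).2 hv1'⟩
      have h1 := Finset.card_lt_card hssub
      have h2 := Finset.card_le_card hfracsub
      unfold mu
      nlinarith
  exact ⟨x', hx'frac, hx'supp, hx'tight, hx'size, hmu⟩

/-- rounding to a half-integral matching preserving support, saturation and size -/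
lemma round (hne : ∀ e, es e ≠ et e) (x : E → ℝ) (hx : IsFrac es et x) :
    ∃ z : E → ℝ, IsFrac es et z ∧ (∀ e, z e = 0 ∨ z e = 1/2 ∨ z e = 1) ∧
      (∀ e, 0 < z e → 0 < x e) ∧ (∀ v, degSum es et x v = 1 → degSum es et z v = 1) ∧
      size x ≤ size z := by
  generalize hn : mu es et x = n
  induction n using Nat.strong_induction_on generalizing x with
  | _ n ih =>
    by_cases hstuck : ∀ y : E → ℝ, (∀ e, x e = 0 ∨ x e = 1 → y e = 0) →
        (∀ v, degSum es et x v = 1 → degSum es et y v = 0) → y = 0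
    · exact ⟨x, hx, stuck_all_half es et hne x hx hstuck, fun e h => h, fun v h => h, le_refl _⟩
    · push_neg at hstuck
      obtain ⟨y, hy1, hy2, hy3⟩ := hstuck
      have hstep : ∃ x' : E → ℝ, IsFrac es et x' ∧ (∀ e, 0 < x' e → 0 < x e) ∧
          (∀ v, degSum es et x v = 1 → degSum es et x' v = 1) ∧
          size x ≤ size x' ∧ mu es et x' < mu es et x := by
        rcases le_total 0 (∑ e, y e) with hs | hs
        · exact step es et x hx y hy3 hy1 hy2 hs
        · refine step es et x hx (fun e => -y e) ?_ ?_ ?_ ?_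
          · intro hc
            apply hy3
            funext e
            have := congrFun hc e
            simp only [Pi.zero_apply] at this ⊢
            linarith
          · intro e he; show -y e = 0; rw [hy1 e he, neg_zero]
          · intro v hv
            have h1 : degSum es et (fun e => -y e) v = -degSum es et y v := by
              simp [degSum]
            rw [h1, hy2 v hv, neg_zero]
          · simp only [Finset.sum_neg_distrib]
            linarith
      obtain ⟨x', h1, h2, h3, h4, h5⟩ := hstep
      obtain ⟨z, hz1, hz2, hz3, hz4, hz5⟩ := ih (mu es et x') (hn ▸ h5) x' h1 rfl
      exact ⟨z, hz1, hz2, fun e he => h2 e (hz3 e he), fun v hv => hz4 v (h3 v hv),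
        h4.trans hz5⟩

/-- if the degree sum is 1 then there is an incident edge with positive value -/
lemma exists_pos_of_deg_one {x : E → ℝ} (hx0 : ∀ e, 0 ≤ x e) {v : V}
    (h : degSum es et x v = 1) :
    ((incident es et v).filter fun e => 0 < x e).Nonempty := by
  by_contra hc
  rw [Finset.not_nonempty_iff_eq_empty, Finset.filter_eq_empty_iff] at hc
  have : degSum es et x v = 0 := Finset.sum_eq_zero fun e he =>
    le_antisymm (not_lt.mp (hc he)) (hx0 e)
  rw [this] at h
  norm_num at h

/-- monotonicity of `pval` under support shrinking and saturation preservation -/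
lemma pval_mono (p : V → E → ℝ) (pE : V → ℝ)
    (hp : ∀ v, ∀ e ∈ incident es et v, 0 ≤ p v e) (hpE : ∀ v, pE v ≤ 0)
    (x z : E → ℝ) (hz0 : ∀ e, 0 ≤ z e)
    (hsupp : ∀ e, 0 < z e → 0 < x e)
    (htight : ∀ v, degSum es et x v = 1 → degSum es et z v = 1) (v : V) :
    pval es et p pE x v ≤ pval es et p pE z v := by
  unfold pval
  by_cases hzc : degSum es et z v = 1 ∧ ((incident es et v).filter fun e => 0 < z e).Nonempty
  · rw [dif_pos hzc]
    have hz_nonneg : (0:ℝ) ≤ ((incident es et v).filter fun e => 0 < z e).inf' hzc.2 (p v) :=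
      Finset.le_inf' _ _ fun b hb => hp v b (Finset.mem_filter.mp hb).1
    by_cases hxc : degSum es et x v = 1 ∧ ((incident es et v).filter fun e => 0 < x e).Nonempty
    · rw [dif_pos hxc]
      obtain ⟨b, hb, hbeq⟩ := Finset.exists_mem_eq_inf' hzc.2 (p v)
      rw [hbeq]
      exact Finset.inf'_le _ (Finset.mem_filter.mpr
        ⟨(Finset.mem_filter.mp hb).1, hsupp b (Finset.mem_filter.mp hb).2⟩)
    · rw [dif_neg hxc]
      exact (hpE v).trans hz_nonneg
  · rw [dif_neg hzc]
    have hxc : ¬(degSum es et x v = 1 ∧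
        ((incident es et v).filter fun e => 0 < x e).Nonempty) := by
      rintro ⟨h1, _⟩
      exact hzc ⟨htight v h1, exists_pos_of_deg_one es et hz0 (htight v h1)⟩
    rw [dif_neg hxc]

end Rounding

/-- For every `γ`-stable fractional-matching there is a
`γ`-stable half-matching of at least the same size. -/
theorem exists_gammaStable_halfMatching_ge
    {V E : Type*} [Fintype V] [Fintype E] [DecidableEq V] [DecidableEq E]
    (es et : E → V) (hne : ∀ e, es e ≠ et e)
    (p : V → E → ℝ) (pE : V → ℝ)
    (hp : ∀ v, ∀ e ∈ incident es et v, 0 ≤ p v e)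
    (hpE : ∀ v, pE v ≤ 0)
    (γ δ : V → E → ℝ)
    (hγ : ∀ v, ∀ e ∈ incident es et v, 0 < γ v e)
    (hγδ : ∀ v, ∀ e ∈ incident es et v, γ v e < δ v e)
    (M : E → ℝ) (hM : IsFrac es et M) (hMst : GammaStable es et p pE γ δ M) :
    ∃ Mhat : E → ℝ, IsHalf es et Mhat ∧ GammaStable es et p pE γ δ Mhat ∧
      size M ≤ size Mhat := by
  obtain ⟨z, hz1, hz2, hz3, hz4, hz5⟩ := round es et hne M hM
  refine ⟨z, ⟨hz1, hz2⟩, ?_, hz5⟩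
  intro e hblock
  apply hMst e
  have h1 := pval_mono es et p pE hp hpE M z hz1.1 hz3 hz4 (es e)
  have h2 := pval_mono es et p pE hp hpE M z hz1.1 hz3 hz4 (et e)
  unfold GammaBlocks at hblock ⊢
  rcases hblock with h | h
  · left
    rw [le_min_iff] at h ⊢
    constructor <;> [linarith [h.1]; linarith [h.2]]
  · right
    rw [le_min_iff] at h ⊢
    constructor <;> [linarith [h.1]; linarith [h.2]]


end SR
end

section
/- Let I be a roommates instance with ties and numbers 0<γ_e^v<δ_e^v, and let M be a γ-stable fractional-matching of I. Suppose M = Σ_{i=1}^k λ_i·M_i, where λ_i>0 for all i, Σ_{i=1}^k λ_i = 1, and each M_i is a half-matching. Then every M_i is γ-stable. -/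
open Finset

namespace SR

variable {V E : Type*} [Fintype V] [Fintype E] [DecidableEq V] [DecidableEq E]

/-- If a `γ`-stable fractional-matching is a convex
combination of half-matchings, then each of the half-matchings is `γ`-stable. -/
theorem gammaStable_of_convex_combination
    {V E : Type*} [Fintype V] [Fintype E] [DecidableEq V] [DecidableEq E]
    (es et : E → V) (hne : ∀ e, es e ≠ et e)
    (p : V → E → ℝ) (pE : V → ℝ)
    (hp : ∀ v, ∀ e ∈ incident es et v, 0 ≤ p v e)
    (hpE : ∀ v, pE v ≤ 0)
    (γ δ : V → E → ℝ)
    (hγ : ∀ v, ∀ e ∈ incident es et v, 0 < γ v e)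
    (hγδ : ∀ v, ∀ e ∈ incident es et v, γ v e < δ v e)
    (M : E → ℝ) (hM : IsFrac es et M) (hMst : GammaStable es et p pE γ δ M)
    (k : ℕ) (lam : Fin k → ℝ) (Mi : Fin k → E → ℝ)
    (hlam : ∀ i, 0 < lam i) (hsum : ∑ i, lam i = 1)
    (hMi : ∀ i, IsHalf es et (Mi i))
    (hconv : ∀ e, M e = ∑ i, lam i * Mi i e) :
    ∀ i, GammaStable es et p pE γ δ (Mi i) := by
  intro i e hblock
  apply hMst e
  have key : ∀ v, pval es et p pE M v ≤ pval es et p pE (Mi i) v := by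
    intro v
    have hMinn : ∀ j, ∀ f, 0 ≤ Mi j f := fun j f => ((hMi j).1).1 f
    have hApos : ∀ f, 0 < Mi i f → 0 < M f := by
      intro f hf
      rw [hconv]
      exact Finset.sum_pos' (fun j _ => mul_nonneg (hlam j).le (hMinn j f))
        ⟨i, Finset.mem_univ i, mul_pos (hlam i) hf⟩
    have hdeg : degSum es et M v = ∑ j, lam j * degSum es et (Mi j) v := by
      simp only [degSum, hconv, Finset.mul_sum]
      rw [Finset.sum_comm]
    have hdle : ∀ j, degSum es et (Mi j) v ≤ 1 := fun j => ((hMi j).1).2 v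
    unfold pval
    split_ifs with h1 h2 h2
    · -- both saturated: support of Mi i ⊆ support of M
      obtain ⟨f, hf, hfeq⟩ := Finset.exists_mem_eq_inf' h2.2 (p v)
      rw [hfeq]
      apply Finset.inf'_le
      simp only [Finset.mem_filter] at hf ⊢
      exact ⟨hf.1, hApos f hf.2⟩
    · -- M saturated but not Mi i: impossible
      exfalso
      have hdi : degSum es et (Mi i) v = 1 := by
        by_contra hne1
        have hlt : degSum es et (Mi i) v < 1 := lt_of_le_of_ne (hdle i) hne1
        have : ∑ j, lam j * degSum es et (Mi j) v < ∑ j, lam j := by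
          apply Finset.sum_lt_sum
          · intro j _
            calc lam j * degSum es et (Mi j) v ≤ lam j * 1 :=
                  mul_le_mul_of_nonneg_left (hdle j) (hlam j).le
              _ = lam j := mul_one _
          · exact ⟨i, Finset.mem_univ i, by nlinarith [hlam i]⟩
        rw [← hdeg, hsum, h1.1] at this
        exact lt_irrefl _ this
      apply h2
      refine ⟨hdi, ?_⟩
      by_contra hemp
      rw [Finset.not_nonempty_iff_eq_empty, Finset.filter_eq_empty_iff] at hemp
      have : degSum es et (Mi i) v = 0 := by
        apply Finset.sum_eq_zero
        intro f hfm
        have := hemp hfm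
        have := hMinn i f
        linarith
      rw [this] at hdi; norm_num at hdi
    · -- M unsaturated, Mi i saturated: pE v ≤ 0 ≤ inf'
      have h0 : (0 : ℝ) ≤ ((incident es et v).filter fun f => 0 < Mi i f).inf' h2.2 (p v) := by
        apply Finset.le_inf'
        intro f hf
        exact hp v f (Finset.mem_filter.mp hf).1
      linarith [hpE v]
    · exact le_refl _
  have kes := key (es e)
  have ket := key (et e)
  rcases hblock with h | h
  · left
    rw [le_min_iff] at h ⊢
    exact ⟨by linarith [h.1], by linarith [h.2]⟩
  · right
    rw [le_min_iff] at h ⊢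
    exact ⟨by linarith [h.1], by linarith [h.2]⟩

end SR
end

section
/- Let I be a roommates instance with ties, let I' be a 3-copy instance of I, and let M' be a stable half-matching of I' with respect to the strict orders ≻'_v. Then the projection M of M' is a weakly stable half-matching of I. -/
open Finset

namespace SR

variable {V E : Type*} [Fintype V] [Fintype E] [DecidableEq V] [DecidableEq E]

/-- `c` is the "own" copy `e^k` at the endpoint `v = v_k`: the copy `(e,0)` for
the first endpoint and the copy `(e,2)` for the second endpoint. -/
def ownCopy (es et : E → V) (v : V) (c : E × Fin 3) : Prop :=
  (v = es c.1 ∧ c.2 = 0) ∨ (v = et c.1 ∧ c.2 = 2)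

/-- `c` is the middle copy `e^0`. -/
def midCopy (c : E × Fin 3) : Prop := c.2 = 1

/-- `c` is the other endpoint's copy `e^m`, `m ≠ k`, at the endpoint `v = v_k`. -/
def otherCopy (es et : E → V) (v : V) (c : E × Fin 3) : Prop :=
  (v = es c.1 ∧ c.2 = 2) ∨ (v = et c.1 ∧ c.2 = 0)

lemma incident3 (es et : E → V) (v : V) :
    incident (fun c : E × Fin 3 => es c.1) (fun c => et c.1) v
      = (incident es et v) ×ˢ (univ : Finset (Fin 3)) := by
  ext ⟨e, k⟩
  simp [incident, Finset.mem_product]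

lemma degSum3 (es et : E → V) (M' : E × Fin 3 → ℝ) (v : V) :
    degSum (fun c : E × Fin 3 => es c.1) (fun c => et c.1) M' v
      = degSum es et (fun e => ∑ k : Fin 3, M' (e, k)) v := by
  simp only [degSum, incident3, Finset.sum_product]

lemma exists_worse (es et : E → V) (p : V → E → ℝ) (pE : V → ℝ) (M : E → ℝ)
    (hnn : ∀ f, 0 ≤ M f) (w : V) (e : E)
    (hsat : degSum es et M w = 1)
    (hlt : pval es et p pE M w < p w e) :
    ∃ f ∈ incident es et w, 0 < M f ∧ p w f < p w e := by
  have hne' : ((incident es et w).filter fun f => 0 < M f).Nonempty := by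
    by_contra h
    have h0 : degSum es et M w = 0 := by
      apply Finset.sum_eq_zero
      intro f hf
      by_contra hMf
      exact h ⟨f, Finset.mem_filter.2 ⟨hf, lt_of_le_of_ne (hnn f) (Ne.symm hMf)⟩⟩
    rw [h0] at hsat; norm_num at hsat
  rw [pval, dif_pos ⟨hsat, hne'⟩] at hlt
  obtain ⟨f, hf, hpf⟩ := (Finset.inf'_lt_iff hne').1 hlt
  obtain ⟨hf1, hf2⟩ := Finset.mem_filter.1 hf
  exact ⟨f, hf1, hf2, hpf⟩

/-- The projection of a stable half-matching of a 3-copy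
instance is a weakly stable half-matching of the original instance. -/
theorem projection_isHalf_and_weaklyStable
    {V E : Type*} [Fintype V] [Fintype E] [DecidableEq V] [DecidableEq E]
    (es et : E → V) (hne : ∀ e, es e ≠ et e)
    (p : V → E → ℝ) (pE : V → ℝ)
    (hp : ∀ v, ∀ e ∈ incident es et v, 0 ≤ p v e)
    (hpE : ∀ v, pE v ≤ 0)
    (pref' : V → (E × Fin 3) → (E × Fin 3) → Prop)
    (hlin : IsStrictPref (fun c => es c.1) (fun c => et c.1) pref')
    (hi : ∀ v, ∀ c ∈ incident (fun c : E × Fin 3 => es c.1) (fun c => et c.1) v,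
      ∀ d ∈ incident (fun c : E × Fin 3 => es c.1) (fun c => et c.1) v,
        otherCopy es et v d → (ownCopy es et v c ∨ midCopy c) → pref' v c d)
    (hii : ∀ v, ∀ c ∈ incident (fun c : E × Fin 3 => es c.1) (fun c => et c.1) v,
      ∀ d ∈ incident (fun c : E × Fin 3 => es c.1) (fun c => et c.1) v,
        c.1 = d.1 → ownCopy es et v c → midCopy d → pref' v c d)
    (hiii : ∀ v, ∀ c ∈ incident (fun c : E × Fin 3 => es c.1) (fun c => et c.1) v,
      ∀ d ∈ incident (fun c : E × Fin 3 => es c.1) (fun c => et c.1) v,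
        midCopy c → ownCopy es et v d → (pref' v c d ↔ p v d.1 < p v c.1))
    (hiv : ∀ v, ∀ c ∈ incident (fun c : E × Fin 3 => es c.1) (fun c => et c.1) v,
      ∀ d ∈ incident (fun c : E × Fin 3 => es c.1) (fun c => et c.1) v,
        p v d.1 < p v c.1 →
        ((ownCopy es et v c ∧ ownCopy es et v d) ∨ (midCopy c ∧ midCopy d) ∨
          (otherCopy es et v c ∧ otherCopy es et v d)) → pref' v c d)
    (M' : E × Fin 3 → ℝ)
    (hM' : IsHalf (fun c => es c.1) (fun c => et c.1) M')
    (hstab : StableStrict (fun c => es c.1) (fun c => et c.1) pref' M') :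
    IsHalf es et (fun e => ∑ k : Fin 3, M' (e, k)) ∧
    WeaklyStable es et p pE (fun e => ∑ k : Fin 3, M' (e, k)) := by
  obtain ⟨⟨hnn', hdeg'⟩, hval⟩ := hM'
  set M : E → ℝ := fun e => ∑ k : Fin 3, M' (e, k) with hM
  have hnnM : ∀ e, 0 ≤ M e := fun e => Finset.sum_nonneg fun k _ => hnn' (e, k)
  have hdegM : ∀ v, degSum es et M v ≤ 1 := by
    intro v; rw [← degSum3]; exact hdeg' v
  have hbound : ∀ e, M e ≤ 1 := by
    intro e
    have hsub : ({e} : Finset E) ×ˢ (univ : Finset (Fin 3)) ⊆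
        incident (fun c : E × Fin 3 => es c.1) (fun c => et c.1) (es e) := by
      rw [incident3]
      apply Finset.product_subset_product_left
      simp [incident]
    calc M e = ∑ c ∈ ({e} : Finset E) ×ˢ (univ : Finset (Fin 3)), M' c := by
          rw [Finset.sum_product, Finset.sum_singleton]
      _ ≤ ∑ c ∈ incident (fun c : E × Fin 3 => es c.1) (fun c => et c.1) (es e), M' c :=
          Finset.sum_le_sum_of_subset_of_nonneg hsub (fun c _ _ => hnn' c)
      _ ≤ 1 := hdeg' (es e)
  refine ⟨⟨⟨hnnM, hdegM⟩, ?_⟩, ?_⟩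
  · intro e
    have hb := hbound e
    have h0 := hval (e, 0)
    have h1 := hval (e, 1)
    have h2 := hval (e, 2)
    have hMe : M e = M' (e, 0) + M' (e, 1) + M' (e, 2) := by
      rw [hM]; exact Fin.sum_univ_three _
    rw [hMe] at hb ⊢
    rcases h0 with h0 | h0 | h0 <;> rcases h1 with h1 | h1 | h1 <;>
      rcases h2 with h2 | h2 | h2 <;> rw [h0, h1, h2] at hb ⊢ <;> (revert hb; norm_num)
  · intro e hblk
    obtain ⟨hlt1, hpu, hpv⟩ := hblk
    have hc1 : M' (e, 1) < 1 := by
      have hMe : M e = M' (e, 0) + M' (e, 1) + M' (e, 2) := by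
        rw [hM]; exact Fin.sum_univ_three _
      have := hnn' (e, 0); have := hnn' (e, 2)
      rw [hMe] at hlt1; linarith
    apply hstab (e, 1)
    refine ⟨hc1, ?_⟩
    intro w hw
    have hemem : (e, 1) ∈ incident (fun c : E × Fin 3 => es c.1) (fun c => et c.1) w := by
      simp only [incident, Finset.mem_filter, Finset.mem_univ, true_and]
      exact hw
    have hpw : pval es et p pE M w < p w e := by
      rcases hw with hw | hw <;> rw [← hw] <;> [exact hpu; exact hpv]
    by_cases hsat : degSum (fun c : E × Fin 3 => es c.1) (fun c => et c.1) M' w = 1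
    · right
      have hsatM : degSum es et M w = 1 := by rw [← degSum3]; exact hsat
      obtain ⟨f, hf, hMf, hpf⟩ := exists_worse es et p pE M hnnM w e hsatM hpw
      have hfw : es f = w ∨ et f = w := by
        simpa only [incident, Finset.mem_filter, Finset.mem_univ, true_and] using hf
      obtain ⟨m, hm⟩ : ∃ m : Fin 3, 0 < M' (f, m) := by
        by_contra h
        push_neg at h
        have : M f = 0 := Finset.sum_eq_zero fun m _ => le_antisymm (h m) (hnn' (f, m))
        rw [this] at hMf; exact lt_irrefl 0 hMf
      have hfmem : (f, m) ∈ incident (fun c : E × Fin 3 => es c.1) (fun c => et c.1) w := by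
        simp only [incident, Finset.mem_filter, Finset.mem_univ, true_and]
        exact hfw
      refine ⟨(f, m), hfmem, hm, ?_⟩
      fin_cases m
      · -- m = 0
        rcases hfw with hfw | hfw
        · exact (hiii w (e, 1) hemem (f, 0) hfmem rfl (Or.inl ⟨hfw.symm, rfl⟩)).2 hpf
        · exact hi w (e, 1) hemem (f, 0) hfmem (Or.inr ⟨hfw.symm, rfl⟩) (Or.inr rfl)
      · -- m = 1
        exact hiv w (e, 1) hemem (f, 1) hfmem hpf (Or.inr (Or.inl ⟨rfl, rfl⟩))
      · -- m = 2
        rcases hfw with hfw | hfw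
        · exact hi w (e, 1) hemem (f, 2) hfmem (Or.inl ⟨hfw.symm, rfl⟩) (Or.inr rfl)
        · exact (hiii w (e, 1) hemem (f, 2) hfmem rfl (Or.inr ⟨hfw.symm, rfl⟩)).2 hpf
    · exact Or.inl hsat

end SR
end

section
/- In a roommates instance with strict preferences, every extra-popular fractional-matching is both a popular fractional-matching and a popular mixed-matching. -/
open Finset

namespace SR

variable {V E : Type*} [Fintype V] [Fintype E] [DecidableEq V] [DecidableEq E]

lemma sum_optIncident' (es et : E → V) (v : V) (g : Option E → ℝ) :
    ∑ f ∈ optIncident es et v, g f = g none + ∑ f ∈ incident es et v, g (some f) := by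
  unfold optIncident
  rw [Finset.sum_insert (by simp), Finset.sum_map]
  rfl

lemma mem_optIncident' {es et : E → V} {v : V} {e : E} (he : e ∈ incident es et v) :
    (some e : Option E) ∈ optIncident es et v := by
  unfold optIncident
  exact Finset.mem_insert_of_mem (Finset.mem_map_of_mem _ he)

lemma self_mem_incident_s (es et : E → V) (e : E) : e ∈ incident es et (es e) := by
  simp [incident]

lemma self_mem_incident_t (es et : E → V) (e : E) : e ∈ incident es et (et e) := by
  simp [incident]

/-- Every extra-popular fractional-matching is both a popular
fractional-matching and a popular mixed-matching. -/
theorem popularFrac_and_popularMixed_of_extraPopular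
    {V E : Type*} [Fintype V] [Fintype E] [DecidableEq V] [DecidableEq E]
    (es et : E → V) (hne : ∀ e, es e ≠ et e)
    (pref : V → E → E → Prop) (hpref : IsStrictPref es et pref)
    (M : E → ℝ) (hM : IsFrac es et M) (hEP : ExtraPopular es et pref M) :
    PopularFrac es et pref M ∧ PopularMixed es et pref M := by
  constructor
  · -- popular fractional
    intro N hN φ hφ
    obtain ⟨hpos, hrow, hcol, hMn, hNn⟩ := hφ
    set diag : Option E → Option E → ℝ := fun a b =>
      if a = b then a.elim 0 (fun e => min (M e) (N e)) else 0 with hdiag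
    set ψ : V → Option E → Option E → ℝ := fun v a b => φ v a b + diag a b with hψdef
    -- diagonal of φ vanishes
    have hdz : ∀ v, ∀ e ∈ incident es et v, φ v (some e) (some e) = 0 := by
      intro v e he
      have hmem := mem_optIncident' (es := es) (et := et) he
      have h1 : φ v (some e) (some e) ≤ max (M e - N e) 0 := by
        rw [← hrow v e he]
        exact Finset.single_le_sum (fun f _ => hpos v _ f) hmem
      have h2 : φ v (some e) (some e) ≤ max (N e - M e) 0 := by
        rw [← hcol v e he]
        exact Finset.single_le_sum (fun f _ => hpos v f _) hmem
      have h0 := hpos v (some e) (some e)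
      rcases le_total (M e) (N e) with h | h
      · rw [max_eq_right (by linarith)] at h1; linarith
      · rw [max_eq_right (by linarith)] at h2; linarith
    have hdrow : ∀ v, ∀ e ∈ incident es et v,
        ∑ f ∈ optIncident es et v, diag (some e) f = min (M e) (N e) := by
      intro v e he
      rw [sum_optIncident']
      have : ∀ f ∈ incident es et v, diag (some e) (some f)
          = if e = f then min (M e) (N e) else 0 := by
        intro f _
        simp only [hdiag, Option.some.injEq, Option.elim_some]
      rw [Finset.sum_congr rfl this, Finset.sum_ite_eq (incident es et v) e
        (fun _ => min (M e) (N e)), if_pos he]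
      simp [hdiag]
    have hdcol : ∀ v, ∀ e ∈ incident es et v,
        ∑ f ∈ optIncident es et v, diag f (some e) = min (M e) (N e) := by
      intro v e he
      rw [sum_optIncident']
      have : ∀ f ∈ incident es et v, diag (some f) (some e)
          = if f = e then min (M f) (N f) else 0 := by
        intro f _
        simp only [hdiag, Option.some.injEq, Option.elim_some]
      rw [Finset.sum_congr rfl this, Finset.sum_ite_eq' (incident es et v) e
        (fun f => min (M f) (N f)), if_pos he]
      simp [hdiag]
    have hdnone : ∀ (a : Option E), diag none a = 0 ∧ diag a none = 0 := by
      intro a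
      cases a <;> simp [hdiag]
    have hsens : SensiblePairing es et M N ψ := by
      refine ⟨?_, ?_, ?_, ?_, ?_, ?_⟩
      · intro v a b
        have : 0 ≤ diag a b := by
          cases a <;> cases b <;> simp [hdiag] <;> split <;>
            simp [le_min_iff, hM.1, hN.1]
        have := hpos v a b
        simp only [hψdef]; linarith
      · intro v e he
        simp only [hψdef, Finset.sum_add_distrib]
        rw [hrow v e he, hdrow v e he]
        simp only [max_def, min_def]; split_ifs <;> linarith
      · intro v e he
        simp only [hψdef, Finset.sum_add_distrib]
        rw [hcol v e he, hdcol v e he]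
        simp only [max_def, min_def]; split_ifs <;> linarith
      · intro v h
        have hz : ∑ f ∈ optIncident es et v, ψ v none f
            = max (degSum es et N v - degSum es et M v) 0 := by
          simp only [hψdef, Finset.sum_add_distrib]
          rw [hNn v]
          have : ∀ f ∈ optIncident es et v, diag none f = 0 := fun f _ => (hdnone f).1
          rw [Finset.sum_congr rfl this]; simp
        rw [hz] at h
        have : degSum es et M v < degSum es et N v := by
          by_contra hc; push_neg at hc
          rw [max_eq_right (by linarith)] at h; linarith
        linarith [hN.2 v]
      · intro v h
        have hz : ∑ f ∈ optIncident es et v, ψ v f none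
            = max (degSum es et M v - degSum es et N v) 0 := by
          simp only [hψdef, Finset.sum_add_distrib]
          rw [hMn v]
          have : ∀ f ∈ optIncident es et v, diag f none = 0 := fun f _ => (hdnone f).2
          rw [Finset.sum_congr rfl this]; simp
        rw [hz] at h
        have : degSum es et N v < degSum es et M v := by
          by_contra hc; push_neg at hc
          rw [max_eq_right (by linarith)] at h; linarith
        linarith [hM.2 v]
      · intro e
        simp only [hψdef]
        rw [hdz (es e) e (self_mem_incident_s es et e),
          hdz (et e) e (self_mem_incident_t es et e)]
    have hΔ : Delta es et pref ψ = Delta es et pref φ := by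
      unfold Delta
      refine Finset.sum_congr rfl fun v _ => Finset.sum_congr rfl fun a _ =>
        Finset.sum_congr rfl fun b _ => ?_
      by_cases hab : a = b
      · subst hab
        have : vote pref v a a = 0 := by simp [vote]
        rw [this]; ring
      · have : diag a b = 0 := by simp [hdiag, hab]
        simp only [hψdef, this, add_zero]
    have := hEP N hN ψ hsens
    rwa [hΔ] at this
  · -- popular mixed
    intro N hN
    set φ : V → Option E → Option E → ℝ := fun v a b =>
      a.elim (b.elim 0 (fun f => N f * (1 - degSum es et M v)))
        (fun e => b.elim (M e * (1 - degSum es et N v)) (fun f => M e * N f)) with hφdef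
    have hdegM0 : ∀ v, 0 ≤ degSum es et M v :=
      fun v => Finset.sum_nonneg fun f _ => hM.1 f
    have hdegN0 : ∀ v, 0 ≤ degSum es et N v :=
      fun v => Finset.sum_nonneg fun f _ => hN.1 f
    have hsens : SensiblePairing es et M N φ := by
      refine ⟨?_, ?_, ?_, ?_, ?_, ?_⟩
      · intro v a b
        cases a <;> cases b <;> simp only [hφdef, Option.elim_none, Option.elim_some] <;>
          first
            | exact le_refl 0
            | exact mul_nonneg (hN.1 _) (by linarith [hN.2 v, hM.2 v])
            | exact mul_nonneg (hM.1 _) (by linarith [hN.2 v, hM.2 v])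
            | exact mul_nonneg (hM.1 _) (hN.1 _)
      · intro v e _
        rw [sum_optIncident']
        simp only [hφdef, Option.elim_none, Option.elim_some]
        rw [← Finset.mul_sum]
        have : ∑ f ∈ incident es et v, N f = degSum es et N v := rfl
        rw [this]; ring
      · intro v e _
        rw [sum_optIncident']
        simp only [hφdef, Option.elim_none, Option.elim_some]
        rw [← Finset.sum_mul]
        have : ∑ f ∈ incident es et v, M f = degSum es et M v := rfl
        rw [this]; ring
      · intro v h
        rw [sum_optIncident'] at h
        simp only [hφdef, Option.elim_none, Option.elim_some, zero_add] at h
        rw [← Finset.sum_mul] at h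
        by_contra hc; push_neg at hc
        have : degSum es et N v * (1 - degSum es et M v) ≤ 0 :=
          mul_nonpos_of_nonneg_of_nonpos (hdegN0 v) (by linarith)
        have heq : ∑ f ∈ incident es et v, N f = degSum es et N v := rfl
        rw [heq] at h; linarith
      · intro v h
        rw [sum_optIncident'] at h
        simp only [hφdef, Option.elim_none, Option.elim_some, zero_add] at h
        rw [← Finset.sum_mul] at h
        by_contra hc; push_neg at hc
        have : degSum es et M v * (1 - degSum es et N v) ≤ 0 :=
          mul_nonpos_of_nonneg_of_nonpos (hdegM0 v) (by linarith)
        have heq : ∑ f ∈ incident es et v, M f = degSum es et M v := rfl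
        rw [heq] at h; linarith
      · intro e
        simp [hφdef]
    have hΔ : Delta es et pref φ = mixedScore es et pref M N := by
      unfold Delta mixedScore
      refine Finset.sum_congr rfl fun v _ => ?_
      rw [sum_optIncident']
      rw [sum_optIncident' es et v (fun b => φ v none b * vote pref v none b)]
      have hinner : ∀ e ∈ incident es et v,
          ∑ b ∈ optIncident es et v, φ v (some e) b * vote pref v (some e) b
          = M e * (1 - degSum es et N v) * vote pref v (some e) none
            + ∑ f ∈ incident es et v, M e * N f * vote pref v (some e) (some f) := by
        intro e _
        rw [sum_optIncident']
        simp only [hφdef, Option.elim_none, Option.elim_some]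
      rw [Finset.sum_congr rfl hinner, Finset.sum_add_distrib]
      simp only [hφdef, Option.elim_none, Option.elim_some, zero_mul, zero_add]
      ring
    have := hEP N hN φ hsens
    rwa [hΔ] at this

end SR
end

section
/- Consider the bipartite roommates instance with vertices u_1,u_2,u_3,w_1,w_2 and edges u_1w_1, u_1w_2, u_2w_1, u_2w_2, u_3w_2, with strict preferences: u_1: u_1w_1 ≻ u_1w_2; u_2: u_2w_1 ≻ u_2w_2; u_3: only u_3w_2; w_1: u_1w_1 ≻ u_2w_1; w_2: u_1w_2 ≻ u_2w_2 ≻ u_3w_2. The half-matching M with M(u_1w_1)=M(u_1w_2)=M(u_2w_1)=M(u_2w_2)=1/2 and M(u_3w_2)=0 is a popular mixed-matching, but M is not a popular fractional-matching: for the half-matching N with N(u_1w_1)=1, N(u_2w_2)=N(u_3w_2)=1/2 and N(e)=0 otherwise, there is a feasible pairing φ between M and N with Δ(M,N,φ)<0. -/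
open Finset

namespace SR

variable {V E : Type*} [Fintype V] [Fintype E] [DecidableEq V] [DecidableEq E]

namespace Example

/-- Vertices: `0 = u₁`, `1 = u₂`, `2 = u₃`, `3 = w₁`, `4 = w₂`.
Edges: `0 = u₁w₁`, `1 = u₁w₂`, `2 = u₂w₁`, `3 = u₂w₂`, `4 = u₃w₂`. -/
def es : Fin 5 → Fin 5 := ![0, 0, 1, 1, 2]

def et : Fin 5 → Fin 5 := ![3, 4, 3, 4, 4]

/-- The rank of each incident edge in the preference list of each vertex
(smaller is better; the value `5` marks non-incident pairs). -/
def rk : Fin 5 → Fin 5 → ℕ :=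
  ![![0, 1, 5, 5, 5], ![5, 5, 0, 1, 5], ![5, 5, 5, 5, 0],
    ![0, 5, 1, 5, 5], ![5, 0, 5, 1, 2]]

/-- The strict preferences: `u₁ : u₁w₁ ≻ u₁w₂`; `u₂ : u₂w₁ ≻ u₂w₂`; `u₃ :` only
`u₃w₂`; `w₁ : u₁w₁ ≻ u₂w₁`; `w₂ : u₁w₂ ≻ u₂w₂ ≻ u₃w₂`. -/
def pref (v e f : Fin 5) : Prop :=
  e ∈ incident es et v ∧ f ∈ incident es et v ∧ rk v e < rk v f

noncomputable def M : Fin 5 → ℝ := ![1 / 2, 1 / 2, 1 / 2, 1 / 2, 0]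

noncomputable def N : Fin 5 → ℝ := ![1, 0, 0, 1 / 2, 1 / 2]

set_option maxHeartbeats 1000000
instance pref.dec : ∀ v e f, Decidable (pref v e f) := fun v e f =>
  decidable_of_iff (e ∈ incident es et v ∧ f ∈ incident es et v ∧ rk v e < rk v f) Iff.rfl

lemma vote_self (v : Fin 5) (a : Option (Fin 5)) : vote pref v a a = 0 := by
  unfold vote; rw [if_pos rfl]
lemma vote_sn (v e : Fin 5) : vote pref v (some e) none = 1 := by
  unfold vote; rw [if_neg (by simp), if_pos (by trivial)]
lemma vote_ns (v f : Fin 5) : vote pref v none (some f) = -1 := by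
  unfold vote; rw [if_neg (by simp), if_neg (fun h => h.elim)]
lemma vote_pos {v e f : Fin 5} (h : pref v e f) (hne : e ≠ f) :
    vote pref v (some e) (some f) = 1 := by
  unfold vote; rw [if_neg (by simpa using hne), if_pos (show prefExt pref v (some e) (some f) from h)]
lemma vote_neg {v e f : Fin 5} (h : ¬ pref v e f) (hne : e ≠ f) :
    vote pref v (some e) (some f) = -1 := by
  unfold vote; rw [if_neg (by simpa using hne), if_neg (show ¬ prefExt pref v (some e) (some f) from h)]

lemma inc0 : incident es et 0 = {0,1} := by decide
lemma inc1 : incident es et 1 = {2,3} := by decide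
lemma inc2 : incident es et 2 = {4} := by decide
lemma inc3 : incident es et 3 = {0,2} := by decide
lemma inc4 : incident es et 4 = {1,3,4} := by decide

lemma sum2 (g : Fin 5 → ℝ) (a b : Fin 5) (h : (a ∉ ({b} : Finset (Fin 5)))) :
    ∑ e ∈ ({a,b} : Finset (Fin 5)), g e = g a + g b := by
  rw [Finset.sum_insert h, Finset.sum_singleton]
lemma sum3 (g : Fin 5 → ℝ) : ∑ e ∈ ({1,3,4} : Finset (Fin 5)), g e = g 1 + g 3 + g 4 := by
  rw [Finset.sum_insert (by decide), Finset.sum_insert (by decide), Finset.sum_singleton]; ring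

lemma mixedScore_eq (N : Fin 5 → ℝ) : mixedScore es et pref M N =
    4 - 3 * N 0 - 2 * N 1 - 2 * N 2 - N 3 - N 4 := by
  have v001 := vote_pos (show pref 0 0 1 by decide) (by decide)
  have v010 := vote_neg (show ¬ pref 0 1 0 by decide) (by decide)
  have v123 := vote_pos (show pref 1 2 3 by decide) (by decide)
  have v132 := vote_neg (show ¬ pref 1 3 2 by decide) (by decide)
  have v302 := vote_pos (show pref 3 0 2 by decide) (by decide)
  have v320 := vote_neg (show ¬ pref 3 2 0 by decide) (by decide)
  have v413 := vote_pos (show pref 4 1 3 by decide) (by decide)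
  have v431 := vote_neg (show ¬ pref 4 3 1 by decide) (by decide)
  have v414 := vote_pos (show pref 4 1 4 by decide) (by decide)
  have v441 := vote_neg (show ¬ pref 4 4 1 by decide) (by decide)
  have v434 := vote_pos (show pref 4 3 4 by decide) (by decide)
  have v443 := vote_neg (show ¬ pref 4 4 3 by decide) (by decide)
  rw [mixedScore, Fin.sum_univ_five]
  rw [inc0, inc1, inc2, inc3, inc4]
  simp only [degSum, inc0, inc1, inc2, inc3, inc4,
    sum3, Finset.sum_singleton]
  simp only [sum2 _ 0 1 (by decide), sum2 _ 2 3 (by decide), sum2 _ 0 2 (by decide)]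
  rw [v001, v010, v123, v132, v302, v320, v413, v431, v414, v441, v434, v443]
  simp only [vote_self, vote_sn, vote_ns]
  simp only [M, Matrix.cons_val_zero, Matrix.cons_val_one, Matrix.head_cons,
    Matrix.cons_val_two, Matrix.tail_cons, Matrix.cons_val_three, Matrix.cons_val_four]
  ring

lemma opt0 : optIncident es et 0 = {none, some 0, some 1} := by decide
lemma opt1 : optIncident es et 1 = {none, some 2, some 3} := by decide
lemma opt2 : optIncident es et 2 = {none, some 4} := by decide
lemma opt3 : optIncident es et 3 = {none, some 0, some 2} := by decide
lemma opt4 : optIncident es et 4 = {none, some 1, some 3, some 4} := by decide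

lemma sumO0 (g : Option (Fin 5) → ℝ) :
    ∑ a ∈ ({none, some 0, some 1} : Finset (Option (Fin 5))), g a
      = g none + g (some 0) + g (some 1) := by
  rw [Finset.sum_insert (by decide), Finset.sum_insert (by decide), Finset.sum_singleton]; ring
lemma sumO1 (g : Option (Fin 5) → ℝ) :
    ∑ a ∈ ({none, some 2, some 3} : Finset (Option (Fin 5))), g a
      = g none + g (some 2) + g (some 3) := by
  rw [Finset.sum_insert (by decide), Finset.sum_insert (by decide), Finset.sum_singleton]; ring
lemma sumO2 (g : Option (Fin 5) → ℝ) :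
    ∑ a ∈ ({none, some 4} : Finset (Option (Fin 5))), g a = g none + g (some 4) := by
  rw [Finset.sum_insert (by decide), Finset.sum_singleton]
lemma sumO3 (g : Option (Fin 5) → ℝ) :
    ∑ a ∈ ({none, some 0, some 2} : Finset (Option (Fin 5))), g a
      = g none + g (some 0) + g (some 2) := by
  rw [Finset.sum_insert (by decide), Finset.sum_insert (by decide), Finset.sum_singleton]; ring
lemma sumO4 (g : Option (Fin 5) → ℝ) :
    ∑ a ∈ ({none, some 1, some 3, some 4} : Finset (Option (Fin 5))), g a
      = g none + g (some 1) + g (some 3) + g (some 4) := by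
  rw [Finset.sum_insert (by decide), Finset.sum_insert (by decide),
    Finset.sum_insert (by decide), Finset.sum_singleton]; ring

noncomputable def phi : Fin 5 → Option (Fin 5) → Option (Fin 5) → ℝ := fun v a b =>
  if v = 0 ∧ a = some 1 ∧ b = some 0 then 1/2
  else if v = 1 ∧ a = some 2 ∧ b = none then 1/2
  else if v = 2 ∧ a = none ∧ b = some 4 then 1/2
  else if v = 3 ∧ a = some 2 ∧ b = some 0 then 1/2
  else if v = 4 ∧ a = some 1 ∧ b = some 4 then 1/2
  else 0

lemma phi_nonneg (v : Fin 5) (a b : Option (Fin 5)) : 0 ≤ phi v a b := by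
  unfold phi; split_ifs <;> norm_num

lemma degM0 : degSum es et M 0 = 1 := by rw [degSum, inc0, sum2 _ 0 1 (by decide)]; simp [M] <;> norm_num
lemma degM1 : degSum es et M 1 = 1 := by rw [degSum, inc1, sum2 _ 2 3 (by decide)]; simp [M] <;> norm_num
lemma degM2 : degSum es et M 2 = 0 := by rw [degSum, inc2, Finset.sum_singleton]; simp [M] <;> norm_num
lemma degM3 : degSum es et M 3 = 1 := by rw [degSum, inc3, sum2 _ 0 2 (by decide)]; simp [M] <;> norm_num
lemma degM4 : degSum es et M 4 = 1 := by rw [degSum, inc4, sum3]; simp [M] <;> norm_num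
lemma degN0 : degSum es et N 0 = 1 := by rw [degSum, inc0, sum2 _ 0 1 (by decide)]; simp [N] <;> norm_num
lemma degN1 : degSum es et N 1 = 1/2 := by rw [degSum, inc1, sum2 _ 2 3 (by decide)]; simp [N] <;> norm_num
lemma degN2 : degSum es et N 2 = 1/2 := by rw [degSum, inc2, Finset.sum_singleton]; simp [N] <;> norm_num
lemma degN3 : degSum es et N 3 = 1 := by rw [degSum, inc3, sum2 _ 0 2 (by decide)]; simp [N] <;> norm_num
lemma degN4 : degSum es et N 4 = 1 := by rw [degSum, inc4, sum3]; simp [N] <;> norm_num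

lemma fin5 {P : Fin 5 → Prop} (h0 : P 0) (h1 : P 1) (h2 : P 2) (h3 : P 3) (h4 : P 4) :
    ∀ v, P v := by
  intro v; fin_cases v; exacts [h0, h1, h2, h3, h4]

lemma N_isFrac : IsFrac es et N := by
  constructor
  · exact fin5 (by simp [N]) (by simp [N]) (by simp [N]) (by simp [N])
      (by simp [N])
  · refine fin5 ?_ ?_ ?_ ?_ ?_ <;>
      simp only [degN0, degN1, degN2, degN3, degN4] <;> norm_num

lemma phi_feasible : FeasiblePairing es et M N phi := by
  refine ⟨phi_nonneg, ?_, ?_, ?_, ?_⟩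
  · refine fin5 ?_ ?_ ?_ ?_ ?_ <;> intro e he
    · rw [inc0] at he; rw [opt0, sumO0]
      fin_cases he <;> · simp only [phi, reduceIte, reduceCtorEq, Fin.reduceEq, true_and,
        and_true, false_and, and_false, and_self, if_true, if_false]; simp [M, N] <;> norm_num
    · rw [inc1] at he; rw [opt1, sumO1]
      fin_cases he <;> · simp only [phi, reduceIte, reduceCtorEq, Fin.reduceEq, true_and,
        and_true, false_and, and_false, and_self, if_true, if_false]; simp [M, N] <;> norm_num
    · rw [inc2] at he; rw [opt2, sumO2]
      fin_cases he <;> · simp only [phi, reduceIte, reduceCtorEq, Fin.reduceEq, true_and,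
        and_true, false_and, and_false, and_self, if_true, if_false]; simp [M, N] <;> norm_num
    · rw [inc3] at he; rw [opt3, sumO3]
      fin_cases he <;> · simp only [phi, reduceIte, reduceCtorEq, Fin.reduceEq, true_and,
        and_true, false_and, and_false, and_self, if_true, if_false]; simp [M, N] <;> norm_num
    · rw [inc4] at he; rw [opt4, sumO4]
      fin_cases he <;> · simp only [phi, reduceIte, reduceCtorEq, Fin.reduceEq, true_and,
        and_true, false_and, and_false, and_self, if_true, if_false]; simp [M, N] <;> norm_num
  · refine fin5 ?_ ?_ ?_ ?_ ?_ <;> intro e he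
    · rw [inc0] at he; rw [opt0, sumO0]
      fin_cases he <;> · simp only [phi, reduceIte, reduceCtorEq, Fin.reduceEq, true_and,
        and_true, false_and, and_false, and_self, if_true, if_false]; simp [M, N] <;> norm_num
    · rw [inc1] at he; rw [opt1, sumO1]
      fin_cases he <;> · simp only [phi, reduceIte, reduceCtorEq, Fin.reduceEq, true_and,
        and_true, false_and, and_false, and_self, if_true, if_false]; simp [M, N] <;> norm_num
    · rw [inc2] at he; rw [opt2, sumO2]
      fin_cases he <;> · simp only [phi, reduceIte, reduceCtorEq, Fin.reduceEq, true_and,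
        and_true, false_and, and_false, and_self, if_true, if_false]; simp [M, N] <;> norm_num
    · rw [inc3] at he; rw [opt3, sumO3]
      fin_cases he <;> · simp only [phi, reduceIte, reduceCtorEq, Fin.reduceEq, true_and,
        and_true, false_and, and_false, and_self, if_true, if_false]; simp [M, N] <;> norm_num
    · rw [inc4] at he; rw [opt4, sumO4]
      fin_cases he <;> · simp only [phi, reduceIte, reduceCtorEq, Fin.reduceEq, true_and,
        and_true, false_and, and_false, and_self, if_true, if_false]; simp [M, N] <;> norm_num
  · refine fin5 ?_ ?_ ?_ ?_ ?_ <;>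
      simp only [degM0, degM1, degM2, degM3, degM4, degN0, degN1, degN2, degN3, degN4,
        opt0, opt1, opt2, opt3, opt4, sumO0, sumO1, sumO2, sumO3, sumO4] <;>
      · simp only [phi, reduceIte, reduceCtorEq, Fin.reduceEq, true_and,
          and_true, false_and, and_false, and_self, if_true, if_false]; simp <;> norm_num
  · refine fin5 ?_ ?_ ?_ ?_ ?_ <;>
      simp only [degM0, degM1, degM2, degM3, degM4, degN0, degN1, degN2, degN3, degN4,
        opt0, opt1, opt2, opt3, opt4, sumO0, sumO1, sumO2, sumO3, sumO4] <;>
      · simp only [phi, reduceIte, reduceCtorEq, Fin.reduceEq, true_and,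
          and_true, false_and, and_false, and_self, if_true, if_false]; simp <;> norm_num

lemma delta_neg : Delta es et pref phi < 0 := by
  have v010 := vote_neg (show ¬ pref 0 1 0 by decide) (by decide)
  have v320 := vote_neg (show ¬ pref 3 2 0 by decide) (by decide)
  have v414 := vote_pos (show pref 4 1 4 by decide) (by decide)
  rw [Delta, Fin.sum_univ_five, opt0, opt1, opt2, opt3, opt4]
  simp only [sumO0, sumO1, sumO2, sumO3, sumO4]
  rw [v010, v320, v414]
  simp only [vote_self, vote_sn, vote_ns]
  simp only [phi, reduceIte, reduceCtorEq, Fin.reduceEq, true_and, and_true, false_and,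
    and_false, and_self, if_true, if_false]
  simp

/-- In the five-agent example, `M` is a popular
mixed-matching but not a popular fractional-matching: some feasible pairing
between `M` and `N` has `Δ(M,N,φ) < 0`. -/
theorem popularMixed_not_popularFrac :
    PopularMixed es et pref M ∧ ¬ PopularFrac es et pref M ∧
      ∃ φ : Fin 5 → Option (Fin 5) → Option (Fin 5) → ℝ,
        FeasiblePairing es et M N φ ∧ Delta es et pref φ < 0 := by
  refine ⟨?_, ?_, phi, phi_feasible, delta_neg⟩
  · intro Nf hNf
    rw [mixedScore_eq]
    have h0 := hNf.2 0
    have h3 := hNf.2 3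
    have h4 := hNf.2 4
    rw [degSum, inc0, sum2 _ 0 1 (by decide)] at h0
    rw [degSum, inc3, sum2 _ 0 2 (by decide)] at h3
    rw [degSum, inc4, sum3] at h4
    have n0 := hNf.1 0
    have n1 := hNf.1 1
    have n2 := hNf.1 2
    have n3 := hNf.1 3
    have n4 := hNf.1 4
    linarith
  · intro hP
    exact absurd (hP N N_isFrac phi phi_feasible) (not_le.2 delta_neg)

end Example

end SR
end

section
/- In a roommates instance with strict preferences, every stable half-matching is a popular fractional-matching. -/
open Finset

namespace SR

variable {V E : Type*} [Fintype V] [Fintype E] [DecidableEq V] [DecidableEq E]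

set_option linter.unusedSectionVars false in
lemma vote_ge_neg_one (pref : V → E → E → Prop) (v : V) (a b : Option E) :
    -1 ≤ vote pref v a b := by
  unfold vote; split_ifs <;> norm_num

set_option linter.unusedSectionVars false in
lemma vote_none_nonneg (pref : V → E → E → Prop) (v : V) (a : Option E) :
    0 ≤ vote pref v a none := by
  unfold vote
  rcases a with _ | e
  · simp
  · split_ifs <;> simp_all [prefExt]

set_option linter.unusedSectionVars false in
lemma vote_eq_one (pref : V → E → E → Prop) (v : V) {a b : Option E}
    (h1 : a ≠ b) (h2 : prefExt pref v a b) : vote pref v a b = 1 := by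
  unfold vote; split_ifs <;> tauto

set_option linter.unusedSectionVars false in
lemma mem_incident_es (es et : E → V) (b : E) : b ∈ incident es et (es b) := by
  simp [incident]

set_option linter.unusedSectionVars false in
lemma mem_incident_et (es et : E → V) (b : E) : b ∈ incident es et (et b) := by
  simp [incident]

set_option linter.unusedSectionVars false in
lemma some_mem_optIncident (es et : E → V) {v : V} {b : E}
    (hb : b ∈ incident es et v) : (some b) ∈ optIncident es et v := by
  unfold optIncident
  exact Finset.mem_insert_of_mem (Finset.mem_map_of_mem _ hb)

/-- In a roommates instance with strict preferences, every
stable half-matching is a popular fractional-matching. -/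
theorem popularFrac_of_stable_halfMatching
    {V E : Type*} [Fintype V] [Fintype E] [DecidableEq V] [DecidableEq E]
    (es et : E → V) (hne : ∀ e, es e ≠ et e)
    (pref : V → E → E → Prop) (hpref : IsStrictPref es et pref)
    (M : E → ℝ) (hM : IsHalf es et M) (hst : StableStrict es et pref M) :
    PopularFrac es et pref M := by
  intro N hN φ hφ
  obtain ⟨hφ0, hrow, hcol, hMno, hNMo⟩ := hφ
  obtain ⟨⟨hM0, hMdeg⟩, -⟩ := hM
  obtain ⟨hN0, hNdeg⟩ := hN
  set G : V → E → ℝ := fun v b =>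
    ∑ a ∈ optIncident es et v, φ v a (some b) * vote pref v a (some b) with hGdef
  -- Rewrite Delta, splitting off the `none` columns.
  have hΔ : Delta es et pref φ
      = ∑ v, ((∑ a ∈ optIncident es et v, φ v a none * vote pref v a none)
        + ∑ b ∈ incident es et v, G v b) := by
    unfold Delta
    refine Finset.sum_congr rfl fun v _ => ?_
    rw [Finset.sum_comm]
    rw [show optIncident es et v
        = insert none ((incident es et v).map Function.Embedding.some) from rfl]
    rw [Finset.sum_insert (by simp), Finset.sum_map]
    simp only [Function.Embedding.some_apply, hGdef]
    rfl
  -- `none` columns are nonnegative.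
  have hnonneg1 : ∀ v : V,
      0 ≤ ∑ a ∈ optIncident es et v, φ v a none * vote pref v a none := fun v =>
    Finset.sum_nonneg fun a _ => mul_nonneg (hφ0 v a none) (vote_none_nonneg pref v a)
  -- Reindex the edge columns per edge.
  have hswap : ∑ v, ∑ b ∈ incident es et v, G v b
      = ∑ b : E, (G (es b) b + G (et b) b) := by
    rw [Finset.sum_comm' (t' := (univ : Finset E))
      (s' := fun b => univ.filter fun v => es b = v ∨ et b = v)
      (fun v b => by simp [incident])]
    refine Finset.sum_congr rfl fun b _ => ?_
    have hfil : (univ.filter fun v => es b = v ∨ et b = v) = {es b, et b} := by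
      ext v; simp [eq_comm, or_comm]
    rw [hfil, Finset.sum_pair (hne b)]
  -- Per-edge key inequality.
  have key : ∀ b : E, 0 ≤ G (es b) b + G (et b) b := by
    intro b
    by_cases hbig : M b < N b
    · -- stability provides a savior endpoint for `b`
      have hNb1 : N b ≤ 1 :=
        le_trans (Finset.single_le_sum (fun e _ => hN0 e) (mem_incident_es es et b))
          (hNdeg (es b))
      have hMb1 : M b < 1 := lt_of_lt_of_le hbig hNb1
      have hblock := hst b
      simp only [StrictBlocks] at hblock
      push_neg at hblock
      obtain ⟨w, hwmem, hwsat, hwpref⟩ := hblock hMb1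
      have hbw : b ∈ incident es et w := by
        rcases hwmem with h | h
        · rw [← h]; exact mem_incident_es es et b
        · rw [← h]; exact mem_incident_et es et b
      -- at the savior, every supported vote is +1
      have hsavior : max (N b - M b) 0 ≤ G w b := by
        rw [← hcol w b hbw]
        refine Finset.sum_le_sum fun a ha => ?_
        rcases eq_or_lt_of_le (hφ0 w a (some b)) with h0 | hpos
        · rw [← h0, zero_mul]
        · have hv1 : vote pref w a (some b) = 1 := by
            rcases a with _ | a'
            · exfalso
              have hle : φ w none (some b) ≤ ∑ f ∈ optIncident es et w, φ w none f :=
                Finset.single_le_sum (fun f _ => hφ0 w none f)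
                  (some_mem_optIncident es et hbw)
              rw [hNMo w] at hle
              have hsat1 : degSum es et M w = 1 := hwsat
              have : max (degSum es et N w - degSum es et M w) 0 = 0 := by
                rw [hsat1]
                exact max_eq_right (by linarith [hNdeg w])
              rw [this] at hle
              linarith
            · have ha' : a' ∈ incident es et w := by
                rcases Finset.mem_insert.1 ha with h | h
                · exact absurd h (by simp)
                · obtain ⟨x, hx, hxe⟩ := Finset.mem_map.1 h
                  have : x = a' := by simpa using hxe
                  rwa [← this]
              have hφle : φ w (some a') (some b) ≤ max (M a' - N a') 0 := by
                rw [← hrow w a' ha']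
                exact Finset.single_le_sum (fun f _ => hφ0 w _ f)
                  (some_mem_optIncident es et hbw)
              have hrowpos : N a' < M a' := by
                by_contra hle2
                push_neg at hle2
                rw [max_eq_right (by linarith)] at hφle
                linarith
              have hMa'pos : 0 < M a' := lt_of_le_of_lt (hN0 a') hrowpos
              have hab : a' ≠ b := by rintro rfl; linarith
              have hnotpref : ¬ pref w b a' := fun hp => hwpref a' ha' hMa'pos hp
              have hp : pref w a' b :=
                ((hpref w).2.2 a' ha' b hbw hab).resolve_right hnotpref
              exact vote_eq_one pref w (by simp [hab]) hp
          rw [hv1, mul_one]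
      -- the other endpoint loses at most the column mass
      have hother : ∀ v, b ∈ incident es et v → -(max (N b - M b) 0) ≤ G v b := by
        intro v hv
        have h1 : ∑ a ∈ optIncident es et v, φ v a (some b) * (-1) ≤ G v b :=
          Finset.sum_le_sum fun a _ =>
            mul_le_mul_of_nonneg_left (vote_ge_neg_one pref v a (some b))
              (hφ0 v a (some b))
        have h2 : ∑ a ∈ optIncident es et v, φ v a (some b) * (-1)
            = -(max (N b - M b) 0) := by
          rw [← hcol v b hv, ← Finset.sum_neg_distrib]
          exact Finset.sum_congr rfl fun a _ => by ring
        linarith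
      rcases hwmem with h | h
      · have h1 := hsavior
        have h2 := hother (et b) (mem_incident_et es et b)
        rw [← h] at h1
        linarith
      · have h1 := hsavior
        have h2 := hother (es b) (mem_incident_es es et b)
        rw [← h] at h1
        linarith
    · -- no column mass at all
      push_neg at hbig
      have hzero : ∀ v, b ∈ incident es et v → G v b = 0 := by
        intro v hv
        have hsum0 : ∑ a ∈ optIncident es et v, φ v a (some b) = 0 := by
          rw [hcol v b hv]
          exact max_eq_right (by linarith)
        have hall := (Finset.sum_eq_zero_iff_of_nonneg
          (fun a _ => hφ0 v a (some b))).1 hsum0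
        exact Finset.sum_eq_zero fun a ha => by rw [hall a ha, zero_mul]
      rw [hzero (es b) (mem_incident_es es et b), hzero (et b) (mem_incident_et es et b)]
      norm_num
  rw [hΔ, Finset.sum_add_distrib]
  have hA : 0 ≤ ∑ v, ∑ a ∈ optIncident es et v, φ v a none * vote pref v a none :=
    Finset.sum_nonneg fun v _ => hnonneg1 v
  have hB : 0 ≤ ∑ v, ∑ b ∈ incident es et v, G v b := by
    rw [hswap]
    exact Finset.sum_nonneg fun b _ => key b
  linarith

end SR
end
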